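/- (Empirical content of the model.) Under the multilayered sample selection model with Assumption RCT, for every d ∈ {1,…,K} and every bounded measurable function g : ℝ → ℝ: E[g(Y)·1{D=d} | Z=1] = Σ_{d'=0}^{K} P(T=(d',d)) · E[g(Y_{1,d}) | T=(d',d)] and E[g(Y)·1{D=d} | Z=0] = Σ_{d'=0}^{K} P(T=(d,d')) · E[g(Y_{0,d}) | T=(d,d')], where any summand whose response-type probability is zero is interpreted as zero. -/

import Mathlib

open MeasureTheory ProbabilityTheory

/-- Realized layer `D = D_1·Z + D_0·(1−Z)` (for `Z` valued in `{0,1}`). -/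
def Dreal {Ω : Type*} (Z D0 D1 : Ω → ℕ) (ω : Ω) : ℕ :=
  D1 ω * Z ω + D0 ω * (1 - Z ω)

/-- Realized outcome `Y = Σ_{d=1}^K [Y_{1,d}·Z + Y_{0,d}·(1−Z)]·1{D=d}`. -/
noncomputable def Yreal {Ω : Type*} (K : ℕ) (Z D0 D1 : Ω → ℕ) (Y : ℕ → ℕ → Ω → ℝ)
    (ω : Ω) : ℝ :=
  ∑ d ∈ Finset.Icc 1 K,
    (Y 1 d ω * (Z ω : ℝ) + Y 0 d ω * (1 - (Z ω : ℝ))) *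
      (if Dreal Z D0 D1 ω = d then 1 else 0)

/-- Assumption RCT: the σ-algebra generated by the potential outcomes
`Y_{z,d}` (for `z ∈ {0,1}`, `d ∈ {1,…,K}`) together with `D_0, D_1` is
independent of (the σ-algebra generated by) `Z`. -/
def RCT {Ω : Type*} [MeasurableSpace Ω] (P : Measure Ω) (K : ℕ)
    (Y : ℕ → ℕ → Ω → ℝ) (D0 D1 Z : Ω → ℕ) : Prop :=
  Indep
    ((⨆ z ∈ ({0, 1} : Set ℕ), ⨆ d ∈ Set.Icc 1 K, MeasurableSpace.comap (Y z d) inferInstance)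
      ⊔ MeasurableSpace.comap D0 inferInstance ⊔ MeasurableSpace.comap D1 inferInstance)
    (MeasurableSpace.comap Z inferInstance) P

/-! On the event `{Z = z}` the observed quantity `g(Y)·1{D = d}` coincides with
`g(Y_{z,d})·1{D_z = d}`, which is measurable with respect to the potential outcomes and layers.
By Assumption RCT this variable is independent of `Z`, so conditioning on `{Z = z}` does not
change its expectation. Splitting `{D_z = d}` along the values of the other potential layer
`D_{1-z}` then expresses the expectation as a sum over the response types. -/

section Conditioning

variable {Ω : Type*} {mΩ : MeasurableSpace Ω} {P : Measure Ω} [IsFiniteMeasure P]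

lemma measureReal_mul_integral_cond (A : Set Ω) (f : Ω → ℝ) :
    P.real A * ∫ ω, f ω ∂P[|A] = ∫ ω in A, f ω ∂P := by
  rcases eq_or_ne (P A) 0 with hA | hA
  · rw [measureReal_def, hA, ENNReal.toReal_zero, zero_mul, Measure.restrict_eq_zero.2 hA,
      integral_zero_measure]
  · rw [ProbabilityTheory.cond, integral_smul_measure, smul_eq_mul, ← mul_assoc,
      ENNReal.toReal_inv, measureReal_def,
      mul_inv_cancel₀ (ENNReal.toReal_ne_zero.2 ⟨hA, measure_ne_top P A⟩),
      one_mul]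

lemma ProbabilityTheory.Indep.integral_cond_eq_integral {m : MeasurableSpace Ω} (hm : m ≤ mΩ)
    {X : Ω → ℝ} (hind : Indep m (MeasurableSpace.comap X inferInstance) P) (hX : AEMeasurable X P)
    {A : Set Ω} (hA : MeasurableSet[m] A) (hPA : P A ≠ 0) :
    ∫ ω, X ω ∂P[|A] = ∫ ω, X ω ∂P := by
  refine mul_left_cancel₀ (ENNReal.toReal_ne_zero.2 ⟨hPA, measure_ne_top P A⟩) ?_
  change P.real A * _ = P.real A * _
  rw [measureReal_mul_integral_cond]
  exact hind.setIntegral_eq_mul hm hX hA (f := id) aestronglyMeasurable_id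

lemma integral_mul_ite_eq_sum_measureReal_mul_integral_cond {ι κ : Type*}
    [MeasurableSpace ι] [MeasurableSingletonClass ι]
    [MeasurableSpace κ] [MeasurableSingletonClass κ] [DecidableEq κ]
    {f : Ω → ℝ} (hf : Integrable f P) {V : Ω → ι} {W : Ω → κ} (hV : Measurable V)
    (hW : Measurable W) {S : Finset ι} (hVS : ∀ ω, V ω ∈ S) (k : κ) :
    ∫ ω, f ω * (if W ω = k then 1 else 0) ∂P =
      ∑ i ∈ S, P.real {ω | V ω = i ∧ W ω = k} *
        ∫ ω, f ω ∂P[|{ω | V ω = i ∧ W ω = k}] := by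
  have hB : ∀ i, MeasurableSet {ω | V ω = i ∧ W ω = k} := fun i =>
    (hV (measurableSet_singleton i)).inter (hW (measurableSet_singleton k))
  simp_rw [measureReal_mul_integral_cond, ← integral_indicator (hB _)]
  rw [← integral_finsetSum _ fun i _ => hf.indicator (hB i)]
  congr 1 with ω
  by_cases hWk : W ω = k
  · rw [Finset.sum_eq_single_of_mem (V ω) (hVS ω) fun i _ hi =>
      Set.indicator_of_notMem (fun h => hi h.1.symm) f]
    simp [hWk]
  · simp [hWk]

end Conditioning

section SelectionModel

variable {Ω : Type*} {K : ℕ} {Z D0 D1 : Ω → ℕ} {Y : ℕ → ℕ → Ω → ℝ} {ω : Ω} {d : ℕ}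

lemma Yreal_eq_of_Dreal_eq (hd1 : 1 ≤ d) (hdK : d ≤ K) (hD : Dreal Z D0 D1 ω = d) :
    Yreal K Z D0 D1 Y ω = Y 1 d ω * Z ω + Y 0 d ω * (1 - Z ω) := by
  rw [Yreal, Finset.sum_eq_single_of_mem d (Finset.mem_Icc.2 ⟨hd1, hdK⟩)]
  · simp [hD]
  · intro e _ hne
    simp [hD, Ne.symm hne]

lemma comp_Yreal_mul_ite_of_Z_eq_one (g : ℝ → ℝ) (hd1 : 1 ≤ d) (hdK : d ≤ K)
    (hZ : Z ω = 1) :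
    g (Yreal K Z D0 D1 Y ω) * (if Dreal Z D0 D1 ω = d then 1 else 0) =
      g (Y 1 d ω) * (if D1 ω = d then 1 else 0) := by
  have hD : Dreal Z D0 D1 ω = D1 ω := by simp [Dreal, hZ]
  by_cases h : D1 ω = d
  · simp [hD, h, Yreal_eq_of_Dreal_eq hd1 hdK (hD.trans h), hZ]
  · simp [hD, h]

lemma comp_Yreal_mul_ite_of_Z_eq_zero (g : ℝ → ℝ) (hd1 : 1 ≤ d) (hdK : d ≤ K)
    (hZ : Z ω = 0) :
    g (Yreal K Z D0 D1 Y ω) * (if Dreal Z D0 D1 ω = d then 1 else 0) =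
      g (Y 0 d ω) * (if D0 ω = d then 1 else 0) := by
  have hD : Dreal Z D0 D1 ω = D0 ω := by simp [Dreal, hZ]
  by_cases h : D0 ω = d
  · simp [hD, h, Yreal_eq_of_Dreal_eq hd1 hdK (hD.trans h), hZ]
  · simp [hD, h]

abbrev potentialSigma (K : ℕ) (Y : ℕ → ℕ → Ω → ℝ) (D0 D1 : Ω → ℕ) : MeasurableSpace Ω :=
  (⨆ z ∈ ({0, 1} : Set ℕ), ⨆ d ∈ Set.Icc 1 K, MeasurableSpace.comap (Y z d) inferInstance)
    ⊔ MeasurableSpace.comap D0 inferInstance ⊔ MeasurableSpace.comap D1 inferInstance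

lemma measurable_D0_potentialSigma : Measurable[potentialSigma K Y D0 D1] D0 :=
  Measurable.of_comap_le (le_sup_right.trans le_sup_left)

lemma measurable_D1_potentialSigma : Measurable[potentialSigma K Y D0 D1] D1 :=
  Measurable.of_comap_le le_sup_right

lemma measurable_Y_potentialSigma {z : ℕ} (hz : z ≤ 1) (hd1 : 1 ≤ d) (hdK : d ≤ K) :
    Measurable[potentialSigma K Y D0 D1] (Y z d) := by
  have hz' : z ∈ ({0, 1} : Set ℕ) := by interval_cases z <;> simp
  refine Measurable.of_comap_le (le_trans ?_ (le_sup_left.trans le_sup_left))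
  exact le_iSup₂_of_le z hz' (le_iSup₂_of_le d ⟨hd1, hdK⟩ le_rfl)

variable [MeasurableSpace Ω] {P : Measure Ω} [IsProbabilityMeasure P]

lemma RCT.integral_cond_eq_sum (hRCT : RCT P K Y D0 D1 Z) (hZm : Measurable Z) {z : ℕ}
    (hPz : P {ω | Z ω = z} ≠ 0) (hz : z ≤ 1) (hd1 : 1 ≤ d) (hdK : d ≤ K)
    (hYm : Measurable (Y z d)) {g : ℝ → ℝ} (hg : Measurable g) {C : ℝ} (hgb : ∀ x, |g x| ≤ C)
    {V W : Ω → ℕ} (hV : Measurable V) (hW : Measurable W)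
    (hWσ : Measurable[potentialSigma K Y D0 D1] W) (hVK : ∀ ω, V ω ≤ K) :
    ∫ ω, g (Y z d ω) * (if W ω = d then 1 else 0) ∂P[|{ω | Z ω = z}] =
      ∑ n ∈ Finset.range (K + 1), P.real {ω | V ω = n ∧ W ω = d} *
        ∫ ω, g (Y z d ω) ∂P[|{ω | V ω = n ∧ W ω = d}] := by
  have hφσ : Measurable[potentialSigma K Y D0 D1]
      (fun ω => g (Y z d ω) * if W ω = d then 1 else 0) :=
    (hg.comp (measurable_Y_potentialSigma hz hd1 hdK)).mul
      (Measurable.ite (hWσ (measurableSet_singleton d)) measurable_const measurable_const)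
  have hφ : Measurable (fun ω => g (Y z d ω) * if W ω = d then 1 else 0) :=
    (hg.comp hYm).mul
      (Measurable.ite (hW (measurableSet_singleton d)) measurable_const measurable_const)
  have hind := indep_of_indep_of_le_right (Indep.symm hRCT) hφσ.comap_le
  have hgY : Integrable (fun ω => g (Y z d ω)) P :=
    Integrable.of_bound (hg.comp hYm).aestronglyMeasurable C (ae_of_all _ fun ω => hgb _)
  rw [hind.integral_cond_eq_integral (A := {ω | Z ω = z}) hZm.comap_le hφ.aemeasurable
    ⟨{z}, measurableSet_singleton z, rfl⟩ hPz]
  exact integral_mul_ite_eq_sum_measureReal_mul_integral_cond hgY hV hW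
    (fun ω => Finset.mem_range_succ_iff.2 (hVK ω)) d

end SelectionModel

/-- Summands with `P(T = t) = 0` vanish since the conditional measure is then the zero measure. -/
theorem empirical_content
    {Ω : Type*} [MeasurableSpace Ω] (P : Measure Ω) [IsProbabilityMeasure P]
    (K : ℕ)
    (Z D0 D1 : Ω → ℕ)
    (hZm : Measurable Z) (hD0m : Measurable D0) (hD1m : Measurable D1)
    (hZ01 : ∀ ω, Z ω ≤ 1) (hD0K : ∀ ω, D0 ω ≤ K) (hD1K : ∀ ω, D1 ω ≤ K)
    (hZpos : 0 < P {ω | Z ω = 1}) (hZlt : P {ω | Z ω = 1} < 1)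
    (Y : ℕ → ℕ → Ω → ℝ)
    (hYm : ∀ z ≤ 1, ∀ d, 1 ≤ d → d ≤ K → Measurable (Y z d))
    (hRCT : RCT P K Y D0 D1 Z)
    (g : ℝ → ℝ) (hg : Measurable g) (C : ℝ) (hgb : ∀ x, |g x| ≤ C)
    (d : ℕ) (hd1 : 1 ≤ d) (hdK : d ≤ K) :
    (∫ ω, g (Yreal K Z D0 D1 Y ω) * (if Dreal Z D0 D1 ω = d then 1 else 0)
        ∂(P[|{ω | Z ω = 1}])
      = ∑ d' ∈ Finset.range (K + 1),
          (P {ω | D0 ω = d' ∧ D1 ω = d}).toReal *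
            ∫ ω, g (Y 1 d ω) ∂(P[|{ω | D0 ω = d' ∧ D1 ω = d}]))
    ∧ (∫ ω, g (Yreal K Z D0 D1 Y ω) * (if Dreal Z D0 D1 ω = d then 1 else 0)
        ∂(P[|{ω | Z ω = 0}])
      = ∑ d' ∈ Finset.range (K + 1),
          (P {ω | D0 ω = d ∧ D1 ω = d'}).toReal *
            ∫ ω, g (Y 0 d ω) ∂(P[|{ω | D0 ω = d ∧ D1 ω = d'}])) := by
  have hZ1 : MeasurableSet {ω | Z ω = 1} := hZm (measurableSet_singleton 1)
  have hZ0 : MeasurableSet {ω | Z ω = 0} := hZm (measurableSet_singleton 0)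
  have hPZ0 : P {ω | Z ω = 0} ≠ 0 := by
    have hcompl : {ω | Z ω = 0} = {ω | Z ω = 1}ᶜ := by
      ext ω
      show Z ω = 0 ↔ ¬Z ω = 1
      have := hZ01 ω
      omega
    rw [hcompl, prob_compl_eq_one_sub hZ1]
    exact (tsub_pos_of_lt hZlt).ne'
  constructor
  · rw [integral_congr_ae ((ae_cond_mem hZ1).mono fun ω hω =>
      comp_Yreal_mul_ite_of_Z_eq_one g hd1 hdK hω)]
    exact hRCT.integral_cond_eq_sum hZm hZpos.ne' le_rfl hd1 hdK (hYm 1 le_rfl d hd1 hdK)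
      hg hgb hD0m hD1m measurable_D1_potentialSigma hD0K
  · rw [integral_congr_ae ((ae_cond_mem hZ0).mono fun ω hω =>
      comp_Yreal_mul_ite_of_Z_eq_zero g hd1 hdK hω)]
    have hswap : ∀ n, {ω | D1 ω = n ∧ D0 ω = d} = {ω | D0 ω = d ∧ D1 ω = n} := fun n =>
      Set.ext fun _ => and_comm
    simpa only [hswap, measureReal_def] using
      hRCT.integral_cond_eq_sum hZm hPZ0 zero_le_one hd1 hdK (hYm 0 zero_le_one d hd1 hdK)
        hg hgb hD1m hD0m measurable_D0_potentialSigma hD1K
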